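/- arXiv:2110.02306 — 4 statements merged into one kernel-verified Lean document; each statement's English description precedes it below -/
import Mathlib

section
/- Let a > 0 and define φ₀(μ) = -μ³(sin(μa)cosh(μa) + cos(μa)sinh(μa)) for complex μ. If μ ≠ 0 and φ₀(μ) = 0, then μ is real or purely imaginary. -/
/-!
With `z = μa`, `2 (sin z cosh z + cos z sinh z) = (1 - i) sin((1 + i)z) + (1 + i) sin((1 - i)z)`,
so a zero forces `|sin((1 + i)z)| = |sin((1 - i)z)|`. Since `|sin(x + iy)|² = sin² x + sinh² y`,
for `z = p + iq` this becomes `sinh 2p sinh 2q = sin 2p sin 2q`, which is impossible unless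
`p = 0` or `q = 0`, because `|sin t| < |t| < |sinh t|` for real `t ≠ 0`.
-/

open Complex

theorem Complex.normSq_sin (z : ℂ) :
    normSq (sin z) = Real.sin z.re ^ 2 + Real.sinh z.im ^ 2 := by
  conv_lhs => rw [← re_add_im z, sin_add_mul_I, ← ofReal_sin, ← ofReal_cosh, ← ofReal_cos,
    ← ofReal_sinh, ← ofReal_mul, ← ofReal_mul, normSq_add_mul_I]
  linear_combination Real.sin z.re ^ 2 * Real.cosh_sq z.im
    + Real.sinh z.im ^ 2 * Real.sin_sq_add_cos_sq z.re

theorem Real.abs_sin_lt_abs_sinh {x : ℝ} (hx : x ≠ 0) : |Real.sin x| < |Real.sinh x| :=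
  calc |Real.sin x| < |x| := Real.abs_sin_lt_abs hx
    _ < Real.sinh |x| := Real.self_lt_sinh_iff.2 (abs_pos.2 hx)
    _ = |Real.sinh x| := (Real.abs_sinh x).symm

theorem Real.eq_zero_or_eq_zero_of_sinh_mul_sinh_eq_sin_mul_sin {x y : ℝ}
    (h : Real.sinh x * Real.sinh y = Real.sin x * Real.sin y) : x = 0 ∨ y = 0 := by
  by_contra! hxy
  have hlt := mul_lt_mul'' (Real.abs_sin_lt_abs_sinh hxy.1) (Real.abs_sin_lt_abs_sinh hxy.2)
    (abs_nonneg _) (abs_nonneg _)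
  rw [← abs_mul, ← abs_mul, h] at hlt
  exact lt_irrefl _ hlt

theorem Complex.two_mul_sin_mul_cosh_add_cos_mul_sinh (z : ℂ) :
    2 * (sin z * cosh z + cos z * sinh z) =
      (1 - I) * sin ((1 + I) * z) + (1 + I) * sin ((1 - I) * z) := by
  rw [show (1 + I) * z = z + z * I by ring, show (1 - I) * z = z - z * I by ring,
    sin_add, sin_sub, sin_mul_I, cos_mul_I]
  linear_combination (2 * cos z * sinh z) * I_sq

theorem Complex.normSq_sin_one_add_I_mul_eq {z : ℂ} (h : sin z * cosh z + cos z * sinh z = 0) :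
    normSq (sin ((1 + I) * z)) = normSq (sin ((1 - I) * z)) := by
  have hsum := two_mul_sin_mul_cosh_add_cos_mul_sinh z
  rw [h, mul_zero, eq_comm, add_eq_zero_iff_eq_neg] at hsum
  have hnormSq := congrArg normSq hsum
  have normSq_one_sub_I : normSq (1 - I) = 2 := by norm_num [normSq_apply]
  have normSq_one_add_I : normSq (1 + I) = 2 := by norm_num [normSq_apply]
  rw [map_mul, normSq_neg, map_mul, normSq_one_sub_I, normSq_one_add_I] at hnormSq
  linarith

theorem Complex.re_eq_zero_or_im_eq_zero_of_normSq_sin_eq {z : ℂ}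
    (h : normSq (sin ((1 + I) * z)) = normSq (sin ((1 - I) * z))) : z.re = 0 ∨ z.im = 0 := by
  simp only [normSq_sin, mul_re, mul_im, add_re, add_im, sub_re, sub_im, one_re, one_im,
    I_re, I_im, add_zero, zero_add, sub_zero, zero_sub, one_mul, neg_one_mul, sub_neg_eq_add] at h
  have hprod : Real.sinh (2 * z.re) * Real.sinh (2 * z.im)
      = Real.sin (2 * z.re) * Real.sin (2 * z.im) := by
    rw [Real.sin_two_mul, Real.sin_two_mul, Real.sinh_two_mul, Real.sinh_two_mul]
    simp only [Real.sin_add, Real.sin_sub, Real.sinh_add, Real.sinh_neg, Real.cosh_neg] at h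
    linear_combination h
  simpa using Real.eq_zero_or_eq_zero_of_sinh_mul_sinh_eq_sin_mul_sin hprod

theorem zero_of_phi0_real_or_imaginary (a : ℝ) (ha : 0 < a) (μ : ℂ) (hμ : μ ≠ 0)
    (h : -μ ^ 3 * (Complex.sin (μ * a) * Complex.cosh (μ * a)
        + Complex.cos (μ * a) * Complex.sinh (μ * a)) = 0) :
    μ.im = 0 ∨ μ.re = 0 := by
  have hphi : sin (μ * a) * cosh (μ * a) + cos (μ * a) * sinh (μ * a) = 0 := by
    simpa [hμ] using h
  obtain hre | him :=
    re_eq_zero_or_im_eq_zero_of_normSq_sin_eq (normSq_sin_one_add_I_mul_eq hphi)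
  · right
    simpa [ha.ne'] using hre
  · left
    simpa [ha.ne'] using him
end

section
/- Let a > 0 and f(μ) = cos(μa)cosh(μa) - 1. For every nonnegative integer m, f has exactly one zero in the interval [(2m + 3/2)π/a, (2m + 2)π/a], and this zero is simple. -/
/-!
Put `θ = μ a`. On `[(2m + 3/2)π, (2m + 2)π]` we have `cos θ ≥ 0 ≥ sin θ`, so the derivative
`a (cos θ sinh θ - sin θ cosh θ)` of `f` is positive there. Hence `f` is strictly increasing on
the interval, runs from `f = -1` (where `cos θ = 0`) to `f = cosh θ - 1 ≥ 0` (where `cos θ = 1`),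
and so has exactly one zero, at which the derivative does not vanish.
-/

open Real Set

theorem existsUnique_zero_of_hasDerivAt_pos {f f' : ℝ → ℝ} {L R : ℝ} (hLR : L ≤ R)
    (hf : ∀ x ∈ Icc L R, HasDerivAt f (f' x) x) (hf' : ∀ x ∈ Icc L R, 0 < f' x)
    (hL : f L ≤ 0) (hR : 0 ≤ f R) : ∃! x, x ∈ Icc L R ∧ f x = 0 := by
  have hcont : ContinuousOn f (Icc L R) := fun x hx => (hf x hx).continuousAt.continuousWithinAt
  have hmono : StrictMonoOn f (Icc L R) := by
    refine strictMonoOn_of_deriv_pos (convex_Icc L R) hcont fun x hx => ?_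
    rw [interior_Icc] at hx
    rw [(hf x (Ioo_subset_Icc_self hx)).deriv]
    exact hf' x (Ioo_subset_Icc_self hx)
  obtain ⟨x, hx, hfx⟩ := intermediate_value_Icc hLR hcont ⟨hL, hR⟩
  exact ⟨x, ⟨hx, hfx⟩, fun y ⟨hy, hfy⟩ => hmono.injOn hy hx (hfy.trans hfx.symm)⟩

theorem cos_nonneg_and_sin_nonpos_of_mem_Icc (k : ℤ) {θ : ℝ}
    (hθ : θ ∈ Icc ((2 * k + 3 / 2) * π) ((2 * k + 2) * π)) : 0 ≤ cos θ ∧ sin θ ≤ 0 := by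
  obtain ⟨h₁, h₂⟩ := hθ
  have hshift : θ = (θ - (k + 1 : ℤ) * (2 * π)) + (k + 1 : ℤ) * (2 * π) := by ring
  rw [hshift, cos_add_int_mul_two_pi, sin_add_int_mul_two_pi]
  push_cast
  exact ⟨cos_nonneg_of_mem_Icc ⟨by linarith, by linarith⟩,
    sin_nonpos_of_nonpos_of_neg_pi_le (by linarith) (by linarith)⟩

theorem cos_mul_sinh_sub_sin_mul_cosh_pos {θ : ℝ} (hθ : 0 < θ) (hcos : 0 ≤ cos θ)
    (hsin : sin θ ≤ 0) : 0 < cos θ * sinh θ - sin θ * cosh θ := by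
  have hsinh := sinh_pos_iff.2 hθ
  rcases hsin.lt_or_eq with hsin | hsin
  · nlinarith [cosh_pos θ]
  · have hcos_one : cos θ = 1 := by nlinarith [sin_sq_add_cos_sq θ]
    simpa [hsin, hcos_one] using hsinh

theorem cos_two_mul_add_three_halves_mul_pi (k : ℤ) : cos ((2 * k + 3 / 2) * π) = 0 := by
  have : (2 * k + 3 / 2) * π = -(π / 2) + (k + 1 : ℤ) * (2 * π) := by push_cast; ring
  rw [this, cos_add_int_mul_two_pi, cos_neg, cos_pi_div_two]

theorem cos_two_mul_add_two_mul_pi (k : ℤ) : cos ((2 * k + 2) * π) = 1 := by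
  have : (2 * k + 2) * π = (k + 1 : ℤ) * (2 * π) := by push_cast; ring
  rw [this, cos_int_mul_two_pi]

theorem hasDerivAt_cos_mul_cosh_comp_mul_sub_one (a x : ℝ) :
    HasDerivAt (fun x => cos (x * a) * cosh (x * a) - 1)
      (a * (cos (x * a) * sinh (x * a) - sin (x * a) * cosh (x * a))) x := by
  have hlin : HasDerivAt (fun y => y * a) a x := hasDerivAt_mul_const a
  exact ((hlin.cos.mul hlin.cosh).sub_const 1).congr_deriv (by ring)

theorem flexible_missile_zero_second_interval (a : ℝ) (ha : 0 < a) (m : ℕ) :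
    (∃! μ : ℝ, μ ∈ Set.Icc ((2 * m + 3 / 2) * Real.pi / a) ((2 * m + 2) * Real.pi / a) ∧
      Real.cos (μ * a) * Real.cosh (μ * a) - 1 = 0) ∧
    (∀ μ ∈ Set.Icc ((2 * m + 3 / 2) * Real.pi / a) ((2 * m + 2) * Real.pi / a),
      Real.cos (μ * a) * Real.cosh (μ * a) - 1 = 0 →
      deriv (fun x : ℝ => Real.cos (x * a) * Real.cosh (x * a) - 1) μ ≠ 0) := by
  have hcosL := cos_two_mul_add_three_halves_mul_pi m
  have hcosR := cos_two_mul_add_two_mul_pi m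
  push_cast at hcosL hcosR
  have hderiv_pos : ∀ μ ∈ Icc ((2 * m + 3 / 2) * π / a) ((2 * m + 2) * π / a),
      0 < a * (cos (μ * a) * sinh (μ * a) - sin (μ * a) * cosh (μ * a)) := by
    rintro μ ⟨h₁, h₂⟩
    have hθ : μ * a ∈ Icc ((2 * (m : ℤ) + 3 / 2) * π) ((2 * (m : ℤ) + 2) * π) := by
      push_cast
      exact ⟨(div_le_iff₀ ha).1 h₁, (le_div_iff₀ ha).1 h₂⟩
    obtain ⟨hcos, hsin⟩ := cos_nonneg_and_sin_nonpos_of_mem_Icc m hθ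
    have hθ_pos : 0 < μ * a := lt_of_lt_of_le (by positivity) hθ.1
    exact mul_pos ha (cos_mul_sinh_sub_sin_mul_cosh_pos hθ_pos hcos hsin)
  refine ⟨existsUnique_zero_of_hasDerivAt_pos ?_
    (fun x _ => hasDerivAt_cos_mul_cosh_comp_mul_sub_one a x) hderiv_pos ?_ ?_,
    fun μ hμ _ => (hasDerivAt_cos_mul_cosh_comp_mul_sub_one a μ).deriv ▸ (hderiv_pos μ hμ).ne'⟩
  · gcongr; linarith
  · simp [div_mul_cancel₀ _ ha.ne', hcosL]
  · simp [div_mul_cancel₀ _ ha.ne', hcosR, one_le_cosh]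
end

section
/- Let a > 0. The zeros μ¹_m ∈ [2mπ/a, (2m+1/2)π/a] and μ²_m ∈ [(2m+3/2)π/a, (2m+2)π/a] of f(μ) = cos(μa)cosh(μa) - 1 satisfy μ¹_m = (2m + 1/2)π/a + o(1) and μ²_m = (2m + 3/2)π/a + o(1) as m → ∞. -/
/-!
A zero x = μa of cos x · cosh x - 1 satisfies cos x = 1 / cosh x, which tends to 0 as x → ∞.
The interval containing x lies within π/2 of a zero c of cos, where |cos x| = |sin (x - c)|;
since arcsin is a continuous inverse of sin on [-π/2, π/2], x - c → 0, and dividing by a gives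
the claim.
-/

open Real Filter Set Topology

theorem Real.tendsto_cosh_atTop : Tendsto cosh atTop atTop :=
  tendsto_atTop_mono' atTop ((eventually_ge_atTop 0).mono fun x hx =>
    (self_le_sinh_iff.2 hx).trans (sinh_lt_cosh x).le) tendsto_id

section
variable {α : Type*} {l : Filter α}

theorem tendsto_zero_of_tendsto_sin {t : α → ℝ} (ht : ∀ i, t i ∈ Icc (-(π / 2)) (π / 2))
    (h : Tendsto (fun i => sin (t i)) l (𝓝 0)) : Tendsto t l (𝓝 0) := by
  have := (continuous_arcsin.tendsto 0).comp h
  rw [arcsin_zero] at this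
  exact this.congr fun i => arcsin_sin (ht i).1 (ht i).2

theorem tendsto_cos_of_cos_mul_cosh_eq_one {x : α → ℝ} (hx : Tendsto x l atTop)
    (hroot : ∀ i, cos (x i) * cosh (x i) = 1) : Tendsto (fun i => cos (x i)) l (𝓝 0) :=
  (tendsto_cosh_atTop.comp hx).inv_tendsto_atTop.congr fun i =>
    (eq_inv_of_mul_eq_one_left (hroot i)).symm

theorem abs_cos_add_of_cos_eq_zero {c : ℝ} (hc : cos c = 0) (t : ℝ) :
    |cos (t + c)| = |sin t| := by
  rw [cos_add, hc, mul_zero, zero_sub, abs_neg, abs_mul]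
  rcases cos_eq_zero_iff_sin_eq.1 hc with h | h <;> simp [h]

theorem tendsto_sub_of_cos_mul_cosh_eq_one {x c : α → ℝ} (hc : ∀ i, cos (c i) = 0)
    (hdist : ∀ i, x i - c i ∈ Icc (-(π / 2)) (π / 2))
    (hroot : ∀ i, cos (x i) * cosh (x i) = 1) (hx : Tendsto x l atTop) :
    Tendsto (fun i => x i - c i) l (𝓝 0) := by
  refine tendsto_zero_of_tendsto_sin hdist ?_
  have hcos := (tendsto_cos_of_cos_mul_cosh_eq_one hx hroot).abs
  rw [abs_zero] at hcos
  refine tendsto_zero_iff_abs_tendsto_zero _ |>.2 <| hcos.congr fun i => ?_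
  rw [Function.comp_apply, ← abs_cos_add_of_cos_eq_zero (hc i), sub_add_cancel]

theorem tendsto_sub_div_of_cos_mul_cosh_sub_one_eq_zero {a : ℝ} (ha : 0 < a) {μ c : α → ℝ}
    (hc : ∀ i, cos (c i) = 0) (hμ : ∀ i, μ i ∈ Icc ((c i - π / 2) / a) ((c i + π / 2) / a))
    (hroot : ∀ i, cos (μ i * a) * cosh (μ i * a) - 1 = 0) (hc_top : Tendsto c l atTop) :
    Tendsto (fun i => μ i - c i / a) l (𝓝 0) := by
  have hdist : ∀ i, μ i * a - c i ∈ Icc (-(π / 2)) (π / 2) := fun i => by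
    have ⟨h₁, h₂⟩ := hμ i
    rw [div_le_iff₀ ha] at h₁
    rw [le_div_iff₀ ha] at h₂
    constructor <;> linarith
  have hx : Tendsto (fun i => μ i * a) l atTop :=
    tendsto_atTop_mono (fun i => by linarith [(hdist i).1])
      (tendsto_atTop_add_const_right _ (-(π / 2)) hc_top)
  have := (tendsto_sub_of_cos_mul_cosh_eq_one hc hdist
    (fun i => sub_eq_zero.1 (hroot i)) hx).div_const a
  rw [zero_div] at this
  exact this.congr fun i => by rw [sub_div, mul_div_cancel_right₀ _ ha.ne']

end

theorem tendsto_two_mul_add_mul_pi_atTop (b : ℝ) :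
    Tendsto (fun m : ℕ => (2 * m + b) * π) atTop atTop :=
  (tendsto_atTop_add_const_right _ b
    (tendsto_natCast_atTop_atTop.const_mul_atTop two_pos)).atTop_mul_const pi_pos

theorem flexible_missile_zero_asymptotics (a : ℝ) (ha : 0 < a) (μ₁ μ₂ : ℕ → ℝ)
    (hmem₁ : ∀ m : ℕ, μ₁ m ∈ Set.Icc (2 * m * Real.pi / a) ((2 * m + 1 / 2) * Real.pi / a))
    (hzero₁ : ∀ m : ℕ, Real.cos (μ₁ m * a) * Real.cosh (μ₁ m * a) - 1 = 0)
    (hmem₂ : ∀ m : ℕ, μ₂ m ∈ Set.Icc ((2 * m + 3 / 2) * Real.pi / a) ((2 * m + 2) * Real.pi / a))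
    (hzero₂ : ∀ m : ℕ, Real.cos (μ₂ m * a) * Real.cosh (μ₂ m * a) - 1 = 0) :
    Filter.Tendsto (fun m : ℕ => μ₁ m - (2 * m + 1 / 2) * Real.pi / a)
      Filter.atTop (nhds 0) ∧
    Filter.Tendsto (fun m : ℕ => μ₂ m - (2 * m + 3 / 2) * Real.pi / a)
      Filter.atTop (nhds 0) := by
  have hπ := pi_pos
  constructor
  · refine tendsto_sub_div_of_cos_mul_cosh_sub_one_eq_zero ha (fun m => ?_)
      (fun m => Icc_subset_Icc (by gcongr; linarith) (by gcongr; linarith) (hmem₁ m)) hzero₁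
      (tendsto_two_mul_add_mul_pi_atTop _)
    exact cos_eq_zero_iff.2 ⟨2 * m, by push_cast; ring⟩
  · refine tendsto_sub_div_of_cos_mul_cosh_sub_one_eq_zero ha (fun m => ?_)
      (fun m => Icc_subset_Icc (by gcongr; linarith) (by gcongr; linarith) (hmem₂ m)) hzero₂
      (tendsto_two_mul_add_mul_pi_atTop _)
    exact cos_eq_zero_iff.2 ⟨2 * m + 1, by push_cast; ring⟩
end

section
/- Let a > 0 and μ a nonzero complex number with cos(μa)cosh(μa) = 1. Then μ⁴ is real and positive; in particular μ is a fourth root of a positive real number. -/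
/-!
Put `z = μa`. The function `y(x) = A (cos μx + cosh μx) + B (sin μx + sinh μx)` with
`A = sinh z - sin z`, `B = cos z - cosh z` solves `y⁗ = μ⁴ y` with `y'' = y''' = 0` at `0`, and
also at `a` exactly because `cos z cosh z = 1`. Integrating `μ⁴ y ȳ` by parts twice gives
`μ⁴ ∫₀ᵃ |y|² = ∫₀ᵃ |y''|²`; as `z ≠ 0` the coefficients `A, B` do not both vanish, so `y ≢ 0`
and `μ⁴ ≥ 0`, and `μ ≠ 0` excludes `μ⁴ = 0`.
-/

open Complex intervalIntegral Set
open scoped ComplexOrder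

noncomputable def trigHypComb (μ P Q R S : ℂ) (x : ℝ) : ℂ :=
  P * cos (μ * x) + Q * sin (μ * x) + R * cosh (μ * x) + S * sinh (μ * x)

lemma hasDerivAt_trigHypComb (μ P Q R S : ℂ) (x : ℝ) :
    HasDerivAt (trigHypComb μ P Q R S) (μ * trigHypComb μ Q (-P) S R x) x := by
  have hlin : HasDerivAt (fun t : ℝ => μ * t) μ x := by
    simpa using (ofRealCLM.hasDerivAt (x := x)).const_mul μ
  have := (((((hasDerivAt_cos _).comp x hlin).const_mul P).add
    (((hasDerivAt_sin _).comp x hlin).const_mul Q)).add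
    (((hasDerivAt_cosh _).comp x hlin).const_mul R)).add
    (((hasDerivAt_sinh _).comp x hlin).const_mul S)
  exact this.congr_deriv (by simp only [trigHypComb]; ring)

lemma trigHypComb_zero (μ P Q R S : ℂ) : trigHypComb μ P Q R S 0 = P + R := by
  simp [trigHypComb]

lemma HasDerivAt.eq_zero_of_eqOn_Icc {E : Type*} [NormedAddCommGroup E] [NormedSpace ℝ E]
    {f : ℝ → E} {f' : E} {a b : ℝ} (hf : HasDerivAt f f' a) (hab : a < b)
    (h0 : EqOn f 0 (Icc a b)) : f' = 0 :=
  (uniqueDiffOn_Icc hab a (left_mem_Icc.2 hab.le)).eq_deriv _ hf.hasDerivWithinAt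
    ((hasDerivWithinAt_const a _ 0).congr h0 (h0 (left_mem_Icc.2 hab.le)))

theorem mul_integral_normSq_eq_of_free_ends {y y₁ y₂ y₃ : ℝ → ℂ} {τ : ℂ} {a b : ℝ}
    (hy : ∀ x, HasDerivAt y (y₁ x) x) (hy₁ : ∀ x, HasDerivAt y₁ (y₂ x) x)
    (hy₂ : ∀ x, HasDerivAt y₂ (y₃ x) x) (hy₃ : ∀ x, HasDerivAt y₃ (τ * y x) x)
    (ha₂ : y₂ a = 0) (ha₃ : y₃ a = 0) (hb₂ : y₂ b = 0) (hb₃ : y₃ b = 0) :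
    τ * ((∫ x in a..b, normSq (y x) : ℝ) : ℂ) = ((∫ x in a..b, normSq (y₂ x) : ℝ) : ℂ) := by
  have hc : Continuous y := continuous_iff_continuousAt.2 fun x => (hy x).continuousAt
  have hc₂ : Continuous y₂ := continuous_iff_continuousAt.2 fun x => (hy₂ x).continuousAt
  -- `y₃ ȳ - y₂ ȳ₁` is the boundary term of the double integration by parts.
  have hG : ∀ x, HasDerivAt (fun x => y₃ x * star (y x) - y₂ x * star (y₁ x))
      (τ * normSq (y x) - normSq (y₂ x)) x := fun x =>
    (((hy₃ x).mul (hy x).star).sub ((hy₂ x).mul (hy₁ x).star)).congr_deriv <| by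
      simp only [star_def, ← mul_conj]; ring
  have hint : ∀ f : ℝ → ℂ, Continuous f → IntervalIntegrable (fun x => (normSq (f x) : ℂ)) MeasureTheory.volume a b :=
    fun f hf => (continuous_ofReal.comp (continuous_normSq.comp hf)).intervalIntegrable a b
  have := integral_eq_sub_of_hasDerivAt (fun x _ => hG x) (((hint y hc).const_mul τ).sub (hint y₂ hc₂))
  rw [integral_sub ((hint y hc).const_mul τ) (hint y₂ hc₂), integral_const_mul, integral_ofReal,
    integral_ofReal] at this
  simpa [ha₂, ha₃, hb₂, hb₃, sub_eq_zero] using this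

theorem nonneg_of_free_ends {y y₁ y₂ y₃ : ℝ → ℂ} {τ : ℂ} {a b : ℝ} (hab : a < b)
    (hy : ∀ x, HasDerivAt y (y₁ x) x) (hy₁ : ∀ x, HasDerivAt y₁ (y₂ x) x)
    (hy₂ : ∀ x, HasDerivAt y₂ (y₃ x) x) (hy₃ : ∀ x, HasDerivAt y₃ (τ * y x) x)
    (ha₂ : y₂ a = 0) (ha₃ : y₃ a = 0) (hb₂ : y₂ b = 0) (hb₃ : y₃ b = 0)
    (hy_ne : ¬EqOn y 0 (Icc a b)) : 0 ≤ τ := by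
  have hc : Continuous y := continuous_iff_continuousAt.2 fun x => (hy x).continuousAt
  obtain ⟨c, hc_mem, hyc⟩ := not_forall₂.1 hy_ne
  have hpos : 0 < ∫ x in a..b, normSq (y x) :=
    integral_pos hab (continuous_normSq.comp hc).continuousOn (fun _ _ => normSq_nonneg _)
      ⟨c, hc_mem, normSq_pos.2 hyc⟩
  have hτ : τ = ((∫ x in a..b, normSq (y₂ x)) / ∫ x in a..b, normSq (y x) : ℝ) := by
    rw [ofReal_div, ← mul_integral_normSq_eq_of_free_ends hy hy₁ hy₂ hy₃ ha₂ ha₃ hb₂ hb₃,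
      mul_div_cancel_right₀ _ (ofReal_ne_zero.2 hpos.ne')]
  rw [hτ]
  exact zero_le_real.2 (div_nonneg (integral_nonneg hab.le fun _ _ => normSq_nonneg _) hpos.le)

lemma eq_zero_of_sin_eq_sinh_of_cos_eq_cosh {z : ℂ} (hs : sin z = sinh z) (hc : cos z = cosh z) :
    z = 0 := by
  have hsin : sin z = 0 := by
    refine pow_eq_zero_iff two_ne_zero |>.1 ?_
    linear_combination (sin_sq_add_cos_sq z - cosh_sq_sub_sinh_sq z + (sin z + sinh z) * hs
      - (cos z + cosh z) * hc) / 2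
  obtain ⟨k, rfl⟩ := sin_eq_zero_iff.1 hsin
  have : Real.sinh (k * Real.pi) = 0 := by exact_mod_cast hs ▸ hsin
  exact_mod_cast Real.sinh_eq_zero.1 this

lemma trigHypComb_not_eqOn_zero {μ P Q : ℂ} {a : ℝ} (hμ : μ ≠ 0) (ha : 0 < a)
    (hPQ : P ≠ 0 ∨ Q ≠ 0) : ¬EqOn (trigHypComb μ P Q P Q) 0 (Icc 0 a) := by
  intro hzero
  have hP : P + P = 0 := by simpa [trigHypComb_zero] using hzero (left_mem_Icc.2 ha.le)
  have hQ : μ * (Q + Q) = 0 := by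
    simpa [trigHypComb_zero] using (hasDerivAt_trigHypComb μ P Q P Q 0).eq_zero_of_eqOn_Icc ha hzero
  rcases hPQ with hP' | hQ'
  · exact hP' (by linear_combination hP / 2)
  · exact hQ' (by simpa [hμ, ← two_mul] using hQ)

theorem mu_pow_four_real_pos_of_cos_cosh_eq_one (a : ℝ) (ha : 0 < a) (μ : ℂ) (hμ : μ ≠ 0)
    (h : Complex.cos (μ * a) * Complex.cosh (μ * a) = 1) :
    (μ ^ 4).im = 0 ∧ 0 < (μ ^ 4).re := by
  set z := μ * a
  set A := sinh z - sin z
  set B := cos z - cosh z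
  have hy := hasDerivAt_trigHypComb μ A B A B
  have hy₁ x := (hasDerivAt_trigHypComb μ B (-A) B A x).const_mul μ
  have hy₂ x := ((hasDerivAt_trigHypComb μ (-A) (-B) A B x).const_mul μ).const_mul μ
  have hy₃ x := (((hasDerivAt_trigHypComb μ (-B) (-(-A)) B A x).const_mul μ).const_mul μ).const_mul μ
  have hy₄ x : HasDerivAt _ (μ ^ 4 * trigHypComb μ A B A B x) x :=
    (hy₃ x).congr_deriv (by simp only [neg_neg]; ring)
  have hAB : A ≠ 0 ∨ B ≠ 0 := by
    by_contra! hAB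
    exact mul_ne_zero hμ (ofReal_ne_zero.2 ha.ne') <| eq_zero_of_sin_eq_sinh_of_cos_eq_cosh
      (by linear_combination -hAB.1) (by linear_combination hAB.2)
  have hnonneg : 0 ≤ μ ^ 4 := by
    refine nonneg_of_free_ends ha hy hy₁ hy₂ hy₄ ?_ ?_ ?_ ?_ (trigHypComb_not_eqOn_zero hμ ha hAB)
    · simp [trigHypComb_zero]
    · simp [trigHypComb_zero]
    · simp only [trigHypComb]; ring
    · simp only [trigHypComb]
      linear_combination μ ^ 3 * (2 * h - sin_sq_add_cos_sq z - cosh_sq_sub_sinh_sq z)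
  obtain ⟨hre, him⟩ := pos_iff.1 (hnonneg.lt_of_ne' (pow_ne_zero 4 hμ))
  exact ⟨him.symm, hre⟩
end
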